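/- arXiv:1801.00151 — 5 statements merged into one kernel-verified Lean document; each statement's English description precedes it below -/
import Mathlib

section
/- Let R be a commutative ring, let c ≥ 1 be an integer, and let x = (x_0,…,x_p) ∈ R^{p+1}, y = (y_0,…,y_q) ∈ R^{q+1}. Then T_c(x)·T_{c+p}(y) = T_c(y)·T_{c+q}(x) as c × (c+p+q) matrices. Consequently, the c × (2c+p+q) matrix B = [T_c(x) | T_c(y)] (horizontal block concatenation) and the (2c+p+q) × (c+p+q) matrix A = [T_{c+p}(y) ; −T_{c+q}(x)] (vertical block concatenation) satisfy B·A = 0. -/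
/-!
Row `i` of `T_m(z)` is the coefficient vector of `X ^ i * z(X)`, where `z(X) = ∑ z_t X ^ t`.
Multiplying a matrix whose rows are coefficient vectors of polynomials of degree `< m + p` by
`T_{m+p}(y)` multiplies each of these polynomials by `y(X)`. Hence row `i` of `T_c(x) T_{c+p}(y)`
is the coefficient vector of `X ^ i x(X) y(X)`, which is symmetric in `x` and `y`; the block
identity `B A = T_c(x) T_{c+p}(y) - T_c(y) T_{c+q}(x) = 0` follows.
-/

/-- The `m × (m+l)` band (Toeplitz) matrix associated to a tuple `z = (z_0, …, z_l)`:
its `(i,j)` entry is `z_{j-i}` if `0 ≤ j - i ≤ l` and `0` otherwise. -/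
def bandMatrix {R : Type*} [CommRing R] (m l : ℕ) (z : Fin (l + 1) → R) :
    Matrix (Fin m) (Fin (m + l)) R :=
  Matrix.of fun i j =>
    if h : (i : ℕ) ≤ (j : ℕ) ∧ (j : ℕ) - (i : ℕ) ≤ l then
      z ⟨(j : ℕ) - (i : ℕ), by omega⟩
    else 0

open Polynomial

section BandMatrix

variable {R : Type*} [CommRing R] [DecidableEq R]

theorem bandMatrix_apply_eq_coeff (m l : ℕ) (z : Fin (l + 1) → R) (i : Fin m)
    (j : Fin (m + l)) : bandMatrix m l z i j = (X ^ (i : ℕ) * ofFn (l + 1) z).coeff j := by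
  rw [coeff_X_pow_mul', bandMatrix, Matrix.of_apply]
  by_cases hij : (i : ℕ) ≤ j
  · by_cases hl : (j : ℕ) - i ≤ l
    · rw [dif_pos ⟨hij, hl⟩, if_pos hij, ofFn_coeff_eq_val_of_lt]
    · rw [dif_neg (by omega), if_pos hij, ofFn_coeff_eq_zero_of_ge _ (by omega)]
  · rw [dif_neg (by omega), if_neg hij]

theorem sum_coeff_mul_bandMatrix {n l : ℕ} (z : Fin (l + 1) → R) (f : R[X])
    (hf : f.natDegree < n) (k : Fin (n + l)) :
    ∑ j : Fin n, f.coeff j * bandMatrix n l z j k = (f * ofFn (l + 1) z).coeff k := by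
  conv_rhs => rw [as_sum_range' f n hf]
  simp only [Finset.sum_mul, finsetSum_coeff, ← C_mul_X_pow_eq_monomial, mul_assoc, coeff_C_mul,
    bandMatrix_apply_eq_coeff]
  exact Fin.sum_univ_eq_sum_range (fun j ↦ f.coeff j * (X ^ j * ofFn (l + 1) z).coeff k) n

theorem bandMatrix_mul_bandMatrix_apply (m p q : ℕ) (x : Fin (p + 1) → R)
    (y : Fin (q + 1) → R) (i : Fin m) (k : Fin (m + p + q)) :
    (bandMatrix m p x * bandMatrix (m + p) q y) i k =
      (X ^ (i : ℕ) * (ofFn (p + 1) x * ofFn (q + 1) y)).coeff k := by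
  have hdeg : (X ^ (i : ℕ) * ofFn (p + 1) x).natDegree < m + p := by
    have hx : (ofFn (p + 1) x).natDegree < p + 1 := ofFn_natDegree_lt (Nat.succ_pos p) x
    calc _ ≤ (X ^ (i : ℕ) : R[X]).natDegree + (ofFn (p + 1) x).natDegree := natDegree_mul_le
      _ ≤ i + p := add_le_add (natDegree_X_pow_le _) (Nat.le_of_lt_succ hx)
      _ < m + p := by omega
  simp only [Matrix.mul_apply, bandMatrix_apply_eq_coeff m p x]
  rw [sum_coeff_mul_bandMatrix y _ hdeg, mul_assoc]

end BandMatrix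

/-- `T_c(x) · T_{c+p}(y) = T_c(y) · T_{c+q}(x)` as `c × (c+p+q)` matrices,
and consequently the horizontal block matrix `B = [T_c(x) | T_c(y)]` and the vertical
block matrix `A = [T_{c+p}(y) ; −T_{c+q}(x)]` satisfy `B · A = 0`. -/
theorem bandMatrix_commute_and_mul_eq_zero {R : Type*} [CommRing R]
    (c p q : ℕ) (x : Fin (p + 1) → R) (y : Fin (q + 1) → R) :
    bandMatrix c p x * bandMatrix (c + p) q y =
      (bandMatrix c q y * bandMatrix (c + q) p x).submatrix id
        (Fin.cast (by omega : c + p + q = c + q + p)) ∧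
    Matrix.fromCols (bandMatrix c p x) (bandMatrix c q y) *
      Matrix.fromRows (bandMatrix (c + p) q y)
        (-(bandMatrix (c + q) p x).submatrix id
            (Fin.cast (by omega : c + p + q = c + q + p))) = 0 := by
  classical
  have hcomm : bandMatrix c p x * bandMatrix (c + p) q y =
      (bandMatrix c q y * bandMatrix (c + q) p x).submatrix id
        (Fin.cast (by omega : c + p + q = c + q + p)) := by
    ext i k
    rw [Matrix.submatrix_apply, bandMatrix_mul_bandMatrix_apply,
      bandMatrix_mul_bandMatrix_apply, mul_comm (ofFn (p + 1) x)]
    rfl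
  refine ⟨hcomm, ?_⟩
  rw [Matrix.fromCols_mul_fromRows, Matrix.mul_neg, hcomm,
    Matrix.submatrix_mul _ _ id id _ Function.bijective_id]
  exact add_neg_cancel _
end

section
/- Let k be an algebraically closed field and let n ≥ 1 and a, b, c ≥ 1 be integers with b ≥ a + c and b ≥ 2c + n − 1. Then there exist a c × b matrix B and a b × a matrix A, both with entries homogeneous linear forms in k[x_0,…,x_n], such that: (1) B·A = 0; (2) for every nonzero v ∈ k^{n+1}, the evaluated matrix B(v) has rank c; (3) A, viewed as a matrix over the fraction field k(x_0,…,x_n), has rank a; and (4) the entries of B span a k-vector subspace of the space of linear forms of dimension min(b − 2c + 2, n + 1). -/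
set_option maxHeartbeats 2000000

open MvPolynomial Matrix Finset

section MonadConstruction

variable (k : Type*) [Field k]

/-- `xv k n t` is the variable `X t` of `k[x_0, …, x_n]` if `t ≤ n`, and `0` otherwise. -/
noncomputable def xv (n t : ℕ) : MvPolynomial (Fin (n + 1)) k :=
  if h : t < n + 1 then MvPolynomial.X ⟨t, h⟩ else 0

/-- Entry of the matrix `B` (with natural-number indices): `B i j = x_{j - 2i}`. -/
noncomputable def bEnt (n i j : ℕ) : MvPolynomial (Fin (n + 1)) k :=
  if 2 * i ≤ j then xv k n (j - 2 * i) else 0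

/-- Entry of the matrix `A` (with natural-number indices, `j` = row, `m` = column):
for core columns (`m < c + n - 1`) it is `(-1)^j x_{2m+1-j}` (suitably truncated),
and for the remaining columns it is `x_0` placed in the zero-columns region of `B`. -/
noncomputable def aEnt (n c j m : ℕ) : MvPolynomial (Fin (n + 1)) k :=
  if m + 1 < c + n then
    (if j ≤ 2 * m + 1 ∧ j + 1 < 2 * c + n then
      MvPolynomial.C ((-1 : k) ^ j) * xv k n (2 * m + 1 - j) else 0)
  else
    (if j = 2 * c + n - 1 + (m - (c + n - 1)) then xv k n 0 else 0)

noncomputable def Bmat (n c b : ℕ) :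
    Matrix (Fin c) (Fin b) (MvPolynomial (Fin (n + 1)) k) :=
  Matrix.of fun i j => bEnt k n (i : ℕ) (j : ℕ)

noncomputable def Amat (n a b c : ℕ) :
    Matrix (Fin b) (Fin a) (MvPolynomial (Fin (n + 1)) k) :=
  Matrix.of fun j m => aEnt k n c (j : ℕ) (m : ℕ)

variable {n a b c : ℕ}

lemma bEnt_eq {i j : ℕ} (h1 : 2 * i ≤ j) (h2 : j ≤ 2 * i + n) :
    bEnt k n i j = MvPolynomial.X ⟨j - 2 * i, by omega⟩ := by
  rw [bEnt, if_pos h1, xv, dif_pos (by omega)]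

lemma bEnt_eq_zero {i j : ℕ} (h : ¬(2 * i ≤ j ∧ j ≤ 2 * i + n)) :
    bEnt k n i j = 0 := by
  rw [bEnt]
  split_ifs with h1
  · rw [xv, dif_neg (by omega)]
  · rfl

lemma aEnt_core_eq {j m : ℕ} (hm : m + 1 < c + n)
    (h1 : j ≤ 2 * m + 1) (h2 : j + 1 < 2 * c + n) (h3 : 2 * m + 1 ≤ j + n) :
    aEnt k n c j m = MvPolynomial.C ((-1 : k) ^ j) *
      MvPolynomial.X ⟨2 * m + 1 - j, by omega⟩ := by
  rw [aEnt, if_pos hm, if_pos (And.intro h1 h2), xv, dif_pos (by omega)]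

lemma aEnt_core_eq_zero {j m : ℕ} (hm : m + 1 < c + n)
    (h : ¬(j ≤ 2 * m + 1 ∧ j + 1 < 2 * c + n ∧ 2 * m + 1 ≤ j + n)) :
    aEnt k n c j m = 0 := by
  rw [aEnt, if_pos hm]
  split_ifs with h1
  · rw [xv, dif_neg (by omega), mul_zero]
  · rfl

lemma xv_isHomogeneous (n t : ℕ) : (xv k n t).IsHomogeneous 1 := by
  unfold xv
  split
  · exact isHomogeneous_X _ _
  · exact isHomogeneous_zero _ _ _

lemma bEnt_isHomogeneous (n i j : ℕ) : (bEnt k n i j).IsHomogeneous 1 := by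
  unfold bEnt
  split
  · exact xv_isHomogeneous k n _
  · exact isHomogeneous_zero _ _ _

lemma aEnt_isHomogeneous (n c j m : ℕ) : (aEnt k n c j m).IsHomogeneous 1 := by
  unfold aEnt
  split
  · split
    · have h0 : (MvPolynomial.C ((-1 : k) ^ j) :
          MvPolynomial (Fin (n + 1)) k).IsHomogeneous 0 := isHomogeneous_C _ _
      simpa using h0.mul (xv_isHomogeneous k n _)
    · exact isHomogeneous_zero _ _ _
  · split
    · exact xv_isHomogeneous k n _
    · exact isHomogeneous_zero _ _ _

/-- `B · A = 0`. -/
lemma B_mul_A (h2 : 2 * c + n - 1 ≤ b) :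
    Bmat k n c b * Amat k n a b c = 0 := by
  refine Matrix.ext fun i m => ?_
  rw [Matrix.mul_apply, Matrix.zero_apply]
  have hi := i.isLt
  have hmlt := m.isLt
  simp only [Bmat, Amat, Matrix.of_apply]
  rw [Fin.sum_univ_eq_sum_range (fun j => bEnt k n (i : ℕ) j * aEnt k n c j (m : ℕ)) b]
  by_cases hm : (m : ℕ) + 1 < c + n
  · -- core column: the sum cancels via the involution `j ↦ 2i + 2m + 1 - j`
    have hzero : ∀ j : ℕ,
        ¬(2 * (i : ℕ) ≤ j ∧ j ≤ 2 * (i : ℕ) + n ∧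
          j ≤ 2 * (m : ℕ) + 1 ∧ 2 * (m : ℕ) + 1 ≤ j + n) →
        bEnt k n (i : ℕ) j * aEnt k n c j (m : ℕ) = 0 := by
      intro j hP
      by_cases hb1 : 2 * (i : ℕ) ≤ j ∧ j ≤ 2 * (i : ℕ) + n
      · rw [aEnt_core_eq_zero k hm (by tauto), mul_zero]
      · rw [bEnt_eq_zero k hb1, zero_mul]
    refine Finset.sum_involution
      (fun j _ => if 2 * (i : ℕ) ≤ j ∧ j ≤ 2 * (i : ℕ) + n ∧
          j ≤ 2 * (m : ℕ) + 1 ∧ 2 * (m : ℕ) + 1 ≤ j + n then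
          2 * (i : ℕ) + (2 * (m : ℕ) + 1) - j else j) ?_ ?_ ?_ ?_
    · -- pairs cancel
      intro j hj
      beta_reduce
      by_cases hP : 2 * (i : ℕ) ≤ j ∧ j ≤ 2 * (i : ℕ) + n ∧
          j ≤ 2 * (m : ℕ) + 1 ∧ 2 * (m : ℕ) + 1 ≤ j + n
      · rw [if_pos hP]
        obtain ⟨hP1, hP2, hP3, hP4⟩ := hP
        set j' : ℕ := 2 * (i : ℕ) + (2 * (m : ℕ) + 1) - j with hj'
        rw [bEnt_eq k hP1 hP2, aEnt_core_eq k hm hP3 (by omega) hP4]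
        rw [bEnt_eq k (i := (i : ℕ)) (j := j') (by omega) (by omega),
          aEnt_core_eq k (j := j') (m := (m : ℕ)) hm (by omega) (by omega) (by omega)]
        have e1 : (⟨j' - 2 * (i : ℕ), by omega⟩ : Fin (n + 1)) =
            ⟨2 * (m : ℕ) + 1 - j, by omega⟩ := Fin.ext (by simp only [Fin.val_mk]; omega)
        have e2 : (⟨2 * (m : ℕ) + 1 - j', by omega⟩ : Fin (n + 1)) =
            ⟨j - 2 * (i : ℕ), by omega⟩ := Fin.ext (by simp only [Fin.val_mk]; omega)
        rw [e1, e2]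
        have hs : ((-1 : k) ^ j') = -((-1 : k) ^ j) := by
          rcases Nat.even_or_odd j with he | ho
          · have ho' : Odd j' := by
              rw [Nat.odd_iff]; rw [Nat.even_iff] at he; omega
            rw [ho'.neg_one_pow, he.neg_one_pow]
          · have he' : Even j' := by
              rw [Nat.even_iff]; rw [Nat.odd_iff] at ho; omega
            rw [he'.neg_one_pow, ho.neg_one_pow]
            simp
        rw [hs, map_neg]
        ring
      · rw [if_neg hP, hzero j hP]
        simp
    · intro j hj hfj
      beta_reduce
      by_cases hP : 2 * (i : ℕ) ≤ j ∧ j ≤ 2 * (i : ℕ) + n ∧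
          j ≤ 2 * (m : ℕ) + 1 ∧ 2 * (m : ℕ) + 1 ≤ j + n
      · rw [if_pos hP]
        omega
      · exact absurd (hzero j hP) hfj
    · intro j hj
      beta_reduce
      simp only [Finset.mem_range] at hj ⊢
      split_ifs with hP <;> omega
    · intro j hj
      beta_reduce
      by_cases hP : 2 * (i : ℕ) ≤ j ∧ j ≤ 2 * (i : ℕ) + n ∧
          j ≤ 2 * (m : ℕ) + 1 ∧ 2 * (m : ℕ) + 1 ≤ j + n
      · rw [if_pos hP, if_pos (by omega)]
        omega
      · rw [if_neg hP, if_neg hP]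
  · -- extra column: `B` vanishes on the rows where `A` is nonzero
    apply Finset.sum_eq_zero
    intro j _
    rw [aEnt, if_neg hm]
    split_ifs with hj
    · rw [bEnt_eq_zero k (by omega), zero_mul]
    · rw [mul_zero]

/-- `B(v)` has rank `c` for every `v ≠ 0`. -/
lemma rank_B (h2 : 2 * c + n - 1 ≤ b) (hc : 1 ≤ c)
    (v : Fin (n + 1) → k) (hv : v ≠ 0) :
    ((Bmat k n c b).map (MvPolynomial.eval v)).rank = c := by
  classical
  have hex : ∃ t : ℕ, ∃ h : t < n + 1, v ⟨t, h⟩ ≠ 0 := by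
    by_contra hcon
    push_neg at hcon
    apply hv
    funext t
    simpa using hcon t.val t.isLt
  set s := Nat.find hex with hs
  obtain ⟨hslt, hvs⟩ := Nat.find_spec hex
  have hmin : ∀ t, t < s → ∀ (h : t < n + 1), v ⟨t, h⟩ = 0 := by
    intro t hts h
    by_contra hne
    exact Nat.find_min hex hts ⟨h, hne⟩
  set M := (Bmat k n c b).map (MvPolynomial.eval v) with hM
  set φ : Fin c → Fin b := fun i => ⟨2 * (i : ℕ) + s, by have := i.isLt; omega⟩ with hφ
  set S : Matrix (Fin c) (Fin c) k := Matrix.of fun i i' => M i (φ i') with hSdef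
  have hSe : ∀ i i' : Fin c,
      S i i' = MvPolynomial.eval v (bEnt k n (i : ℕ) (2 * (i' : ℕ) + s)) := by
    intro i i'; rfl
  have hS : S.BlockTriangular id := by
    intro i i' hlt
    simp only [id] at hlt
    rw [hSe]
    by_cases hle : 2 * (i : ℕ) ≤ 2 * (i' : ℕ) + s
    · rw [bEnt_eq k hle (by omega)]
      rw [MvPolynomial.eval_X]
      exact hmin _ (by omega) _
    · rw [bEnt_eq_zero k (by omega), map_zero]
  have hdiag : ∀ i : Fin c, S i i = v ⟨s, hslt⟩ := by
    intro i
    rw [hSe, bEnt_eq k (by omega) (by omega), MvPolynomial.eval_X]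
    congr 1
    exact Fin.ext (by simp only [Fin.val_mk]; omega)
  have hdet : S.det ≠ 0 := by
    rw [Matrix.det_of_upperTriangular hS]
    refine Finset.prod_ne_zero_iff.mpr fun i _ => ?_
    rw [hdiag]
    exact hvs
  have hU : IsUnit S.det := isUnit_iff_ne_zero.mpr hdet
  have hsurj : Function.Surjective M.mulVecLin := by
    intro y
    have hSv : S.mulVec (S⁻¹.mulVec y) = y := by
      rw [Matrix.mulVec_mulVec, Matrix.mul_nonsing_inv _ hU, Matrix.one_mulVec]
    set u : Fin c → k := S⁻¹.mulVec y with hu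
    refine ⟨fun j => ∑ i' : Fin c, if j = φ i' then u i' else 0, ?_⟩
    rw [Matrix.mulVecLin_apply]
    funext i
    rw [← congrFun hSv i]
    show ∑ j : Fin b, M i j * (∑ i' : Fin c, if j = φ i' then u i' else 0)
        = ∑ i' : Fin c, S i i' * u i'
    simp only [Finset.mul_sum, mul_ite, mul_zero]
    rw [Finset.sum_comm]
    congr 1
    funext i'
    rw [Finset.sum_ite_eq' Finset.univ (φ i') (fun j => M i j * u i')]
    simp only [Finset.mem_univ, if_true]
    rfl
  have hrange : LinearMap.range M.mulVecLin = ⊤ := LinearMap.range_eq_top.mpr hsurj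
  rw [Matrix.rank, hrange, finrank_top, Module.finrank_pi, Fintype.card_fin]

/-- `A` has rank `a` over the fraction field. -/
lemma rank_A (hn : 1 ≤ n) (hc : 1 ≤ c) (h1 : a + c ≤ b) (h2 : 2 * c + n - 1 ≤ b) :
    ((Amat k n a b c).map (algebraMap (MvPolynomial (Fin (n + 1)) k)
      (FractionRing (MvPolynomial (Fin (n + 1)) k)))).rank = a := by
  classical
  obtain ⟨σ, hσo, hσ1, hσle, hσge⟩ :
      ∃ σ, σ % 2 = 1 ∧ 1 ≤ σ ∧ σ ≤ n ∧ n ≤ σ + 1 := by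
    rcases Nat.even_or_odd n with h | h
    · rw [Nat.even_iff] at h
      exact ⟨n - 1, by omega, by omega, by omega, by omega⟩
    · rw [Nat.odd_iff] at h
      exact ⟨n, by omega, by omega, by omega, by omega⟩
  set v : Fin (n + 1) → k := fun t => if (t : ℕ) = 0 ∨ (t : ℕ) = σ then 1 else 0 with hvdef
  have hevx : ∀ t : ℕ, MvPolynomial.eval v (xv k n t) =
      if t = 0 ∨ t = σ then 1 else 0 := by
    intro t
    rw [xv]
    split_ifs with h h2 h2
    · rw [MvPolynomial.eval_X]
      show (if ((⟨t, h⟩ : Fin (n + 1)) : ℕ) = 0 ∨ ((⟨t, h⟩ : Fin (n + 1)) : ℕ) = σ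
          then (1 : k) else 0) = 1
      rw [if_pos (by simpa using h2)]
    · rw [MvPolynomial.eval_X]
      show (if ((⟨t, h⟩ : Fin (n + 1)) : ℕ) = 0 ∨ ((⟨t, h⟩ : Fin (n + 1)) : ℕ) = σ
          then (1 : k) else 0) = 0
      rw [if_neg (by simpa using h2)]
    · omega
    · rw [map_zero]
  have hevA : ∀ J m' : ℕ, m' + 1 < c + n →
      MvPolynomial.eval v (aEnt k n c J m') =
      if J ≤ 2 * m' + 1 ∧ J + 1 < 2 * c + n then
        ((-1 : k) ^ J * (if 2 * m' + 1 - J = 0 ∨ 2 * m' + 1 - J = σ then 1 else 0))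
      else 0 := by
    intro J m' hm'
    rw [aEnt, if_pos hm']
    by_cases h : J ≤ 2 * m' + 1 ∧ J + 1 < 2 * c + n
    · rw [if_pos h, if_pos h, _root_.map_mul, MvPolynomial.eval_C, hevx]
    · rw [if_neg h, if_neg h, map_zero]
  have hevA2 : ∀ J m' : ℕ, ¬(m' + 1 < c + n) →
      MvPolynomial.eval v (aEnt k n c J m') =
      if J = 2 * c + n - 1 + (m' - (c + n - 1)) then 1 else 0 := by
    intro J m' hm'
    rw [aEnt, if_neg hm']
    split_ifs with h
    · rw [hevx, if_pos (Or.inl rfl)]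
    · rw [map_zero]
  set ρ : Fin a → Fin b := fun m =>
    if h : (m : ℕ) + 1 < c + n then
      (if h' : 2 * (m : ℕ) + 2 < 2 * c + n then
        ⟨2 * (m : ℕ) + 1, by omega⟩
      else ⟨2 * (m : ℕ) + 1 - σ, by have := m.isLt; omega⟩)
    else ⟨2 * c + n - 1 + ((m : ℕ) - (c + n - 1)), by have := m.isLt; omega⟩ with hρ
  have hρ1 : ∀ m : Fin a, (m : ℕ) + 1 < c + n → 2 * (m : ℕ) + 2 < 2 * c + n →
      (ρ m : ℕ) = 2 * (m : ℕ) + 1 := by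
    intro m h h'
    simp only [hρ, dif_pos h, dif_pos h']
  have hρ2 : ∀ m : Fin a, (m : ℕ) + 1 < c + n → ¬(2 * (m : ℕ) + 2 < 2 * c + n) →
      (ρ m : ℕ) = 2 * (m : ℕ) + 1 - σ := by
    intro m h h'
    simp only [hρ, dif_pos h, dif_neg h']
  have hρ3 : ∀ m : Fin a, ¬((m : ℕ) + 1 < c + n) →
      (ρ m : ℕ) = 2 * c + n - 1 + ((m : ℕ) - (c + n - 1)) := by
    intro m h
    simp only [hρ, dif_neg h]
  set S : Matrix (Fin a) (Fin a) k :=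
    Matrix.of fun m m' => MvPolynomial.eval v (aEnt k n c (ρ m : ℕ) (m' : ℕ)) with hSdef
  have hSdiag : ∀ m : Fin a, S m m ≠ 0 := by
    intro m
    show MvPolynomial.eval v (aEnt k n c (ρ m : ℕ) (m : ℕ)) ≠ 0
    by_cases hm : (m : ℕ) + 1 < c + n
    · rw [hevA _ _ hm]
      by_cases hm2 : 2 * (m : ℕ) + 2 < 2 * c + n
      · rw [hρ1 m hm hm2, if_pos (by omega), if_pos (by omega)]
        have hodd : Odd (2 * (m : ℕ) + 1) := ⟨(m : ℕ), by omega⟩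
        rw [hodd.neg_one_pow]
        norm_num
      · rw [hρ2 m hm hm2, if_pos (by omega), if_pos (by omega)]
        have hev : Even (2 * (m : ℕ) + 1 - σ) := Nat.even_iff.mpr (by omega)
        rw [hev.neg_one_pow]
        norm_num
    · rw [hevA2 _ _ hm, hρ3 m hm, if_pos rfl]
      exact one_ne_zero
  have hSoff : ∀ m m' : Fin a, m' ≠ m → S m m' = 0 := by
    intro m m' hne
    have hne' : (m' : ℕ) ≠ (m : ℕ) := fun h => hne (Fin.ext h)
    show MvPolynomial.eval v (aEnt k n c (ρ m : ℕ) (m' : ℕ)) = 0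
    by_cases hm' : (m' : ℕ) + 1 < c + n
    · rw [hevA _ _ hm']
      by_cases hm : (m : ℕ) + 1 < c + n
      · by_cases hm2 : 2 * (m : ℕ) + 2 < 2 * c + n
        · rw [hρ1 m hm hm2]
          split_ifs with hg hg2
          · exfalso; omega
          · exact mul_zero _
          · rfl
        · rw [hρ2 m hm hm2]
          split_ifs with hg hg2
          · exfalso; omega
          · exact mul_zero _
          · rfl
      · rw [hρ3 m hm]
        rw [if_neg (by omega)]
    · rw [hevA2 _ _ hm']
      by_cases hm : (m : ℕ) + 1 < c + n
      · by_cases hm2 : 2 * (m : ℕ) + 2 < 2 * c + n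
        · rw [hρ1 m hm hm2, if_neg (by omega)]
        · rw [hρ2 m hm hm2, if_neg (by have := m.isLt; omega)]
      · rw [hρ3 m hm, if_neg (by omega)]
  have hSdet : S.det ≠ 0 := by
    have hdiagS : S = Matrix.diagonal (fun m => S m m) := by
      refine Matrix.ext fun m m' => ?_
      rw [Matrix.diagonal_apply]
      split_ifs with h
      · rw [h]
      · exact hSoff m m' (fun hh => h hh.symm)
    rw [hdiagS, Matrix.det_diagonal]
    exact Finset.prod_ne_zero_iff.mpr fun m _ => hSdiag m
  -- transfer to the fraction field
  set R := MvPolynomial (Fin (n + 1)) k with hR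
  set K := FractionRing R with hK
  set f : R →+* K := algebraMap R K with hf
  have hfinj : Function.Injective f := IsFractionRing.injective R K
  set Asub := (Amat k n a b c).submatrix ρ id with hAsub
  have hmapS : Asub.map (MvPolynomial.eval v) = S := rfl
  have hdetR : Asub.det ≠ 0 := by
    intro h
    have hh := RingHom.map_det (MvPolynomial.eval v) Asub
    have e : (MvPolynomial.eval v).mapMatrix Asub = S := rfl
    rw [h, map_zero, e] at hh
    exact hSdet hh.symm
  set T := Asub.map f with hT
  have hdetT : T.det ≠ 0 := by
    have e : f.mapMatrix Asub = Asub.map ⇑f := rfl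
    rw [hT, ← e, ← RingHom.map_det]
    intro h
    exact hdetR (hfinj (by rw [h, map_zero]))
  have hUT : IsUnit T.det := isUnit_iff_ne_zero.mpr hdetT
  set A' := (Amat k n a b c).map f with hA'
  have hinj : Function.Injective A'.mulVecLin := by
    rw [← LinearMap.ker_eq_bot, LinearMap.ker_eq_bot']
    intro x hx
    have hx' : A'.mulVec x = 0 := hx
    have hTx : T.mulVec x = 0 := by
      funext m
      show ∑ m' : Fin a, T m m' * x m' = 0
      have := congrFun hx' (ρ m)
      simpa [Matrix.mulVec, dotProduct, hT, hAsub, hA'] using this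
    have hxx : T⁻¹.mulVec (T.mulVec x) = x := by
      rw [Matrix.mulVec_mulVec, Matrix.nonsing_inv_mul _ hUT, Matrix.one_mulVec]
    rw [hTx, Matrix.mulVec_zero] at hxx
    exact hxx.symm
  rw [Matrix.rank, LinearMap.finrank_range_of_inj hinj, Module.finrank_pi, Fintype.card_fin]

/-- The entries of `B` span the space of all linear forms, of dimension `n + 1`. -/
lemma span_B (hc : 1 ≤ c) (h2 : 2 * c + n - 1 ≤ b) :
    Module.finrank k (Submodule.span k {f | ∃ i j, Bmat k n c b i j = f}) = n + 1 := by
  classical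
  have hspan : Submodule.span k {f | ∃ i j, Bmat k n c b i j = f} =
      Submodule.span k (Set.range (MvPolynomial.X :
        Fin (n + 1) → MvPolynomial (Fin (n + 1)) k)) := by
    apply le_antisymm
    · rw [Submodule.span_le]
      rintro f ⟨i, j, rfl⟩
      show (bEnt k n (i : ℕ) (j : ℕ)) ∈ _
      rw [bEnt]
      split_ifs with h
      · rw [xv]
        split_ifs with h'
        · exact Submodule.subset_span ⟨_, rfl⟩
        · exact Submodule.zero_mem _
      · exact Submodule.zero_mem _
    · rw [Submodule.span_le]
      rintro f ⟨t, rfl⟩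
      apply Submodule.subset_span
      refine ⟨⟨0, by omega⟩, ⟨(t : ℕ), by have := t.isLt; omega⟩, ?_⟩
      show bEnt k n 0 (t : ℕ) = MvPolynomial.X t
      rw [bEnt, if_pos (by omega), xv, dif_pos (by have := t.isLt; omega)]
      congr 1
  rw [hspan, finrank_span_eq_card (MvPolynomial.linearIndependent_X _ _),
    Fintype.card_fin]

end MonadConstruction

/-- existence of monads on ℙⁿ under Fløystad's condition (i):
if `b ≥ a + c` and `b ≥ 2c + n − 1`, there are matrices of linear forms `B` (size `c × b`)
and `A` (size `b × a`) with `B·A = 0`, `B(v)` of rank `c` at every nonzero `v ∈ k^{n+1}`,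
`A` of rank `a` over the fraction field `k(x_0,…,x_n)`, and the entries of `B` spanning a
space of linear forms of dimension `min(b − 2c + 2, n + 1)`. -/
theorem monad_exists_of_condition_i (k : Type*) [Field k] [IsAlgClosed k]
    (n a b c : ℕ) (hn : 1 ≤ n) (ha : 1 ≤ a) (hb : 1 ≤ b) (hc : 1 ≤ c)
    (h1 : a + c ≤ b) (h2 : 2 * c + n - 1 ≤ b) :
    ∃ (B : Matrix (Fin c) (Fin b) (MvPolynomial (Fin (n + 1)) k))
      (A : Matrix (Fin b) (Fin a) (MvPolynomial (Fin (n + 1)) k)),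
      (∀ i j, (B i j).IsHomogeneous 1) ∧
      (∀ i j, (A i j).IsHomogeneous 1) ∧
      B * A = 0 ∧
      (∀ v : Fin (n + 1) → k, v ≠ 0 → (B.map (MvPolynomial.eval v)).rank = c) ∧
      ((A.map (algebraMap (MvPolynomial (Fin (n + 1)) k)
          (FractionRing (MvPolynomial (Fin (n + 1)) k)))).rank = a) ∧
      Module.finrank k (Submodule.span k {f | ∃ i j, B i j = f})
        = min (b - 2 * c + 2) (n + 1) := by
  refine ⟨Bmat k n c b, Amat k n a b c,
    fun i j => bEnt_isHomogeneous k n _ _,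
    fun j m => aEnt_isHomogeneous k n c _ _,
    B_mul_A k h2,
    fun v hv => rank_B k h2 hc v hv,
    rank_A k hn hc h1 h2, ?_⟩
  rw [span_B k hc h2]
  omega
end

section
/- Let k be an algebraically closed field and let c ≥ 1 and l ≥ 1 be integers. Then there exist a c × (2l + 2c) matrix B and a (2l + 2c) × c matrix A, both with entries homogeneous linear forms in k[x_0,…,x_{2l+1}], such that B·A = 0 and, for every nonzero v ∈ k^{2l+2}, both evaluated matrices A(v) and B(v) have rank c. (Thus on ℙ^{2l+1} there is a monad 0 → O(−1)^c → O^{2l+2c} → O(1)^c → 0 whose cohomology is a vector bundle of rank 2l, the minimal possible rank.) -/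
open MvPolynomial Matrix Finset

section MonadAux

variable {k : Type*} [Field k]

/-- The `m`-th variable of `k[x_0,…,x_{2l+1}]`, or `0` if out of range. -/
noncomputable def mnVr (k : Type*) [Field k] (l m : ℕ) : MvPolynomial (Fin (2*l+2)) k :=
  if h : m < 2*l+2 then MvPolynomial.X ⟨m, h⟩ else 0

lemma mnVr_hom (l m : ℕ) : (mnVr k l m).IsHomogeneous 1 := by
  unfold mnVr
  split
  · exact isHomogeneous_X _ _
  · exact isHomogeneous_zero _ _ _

/-- Evaluation of the variables, as a function of natural number indices. -/
def mnE (l : ℕ) (v : Fin (2*l+2) → k) (m : ℕ) : k :=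
  if h : m < 2*l+2 then v ⟨m, h⟩ else 0

lemma eval_mnVr (l m : ℕ) (v : Fin (2*l+2) → k) :
    MvPolynomial.eval v (mnVr k l m) = mnE l v m := by
  unfold mnVr mnE
  split <;> simp

/-- The matrix `B = (X | Y)` built out of two Toeplitz blocks of linear forms. -/
noncomputable def mnB (k : Type*) [Field k] (l c : ℕ) :
    Matrix (Fin c) (Fin (2*l+2*c)) (MvPolynomial (Fin (2*l+2)) k) :=
  Matrix.of fun i j =>
    if (j:ℕ) < l+c then
      (if (i:ℕ) ≤ (j:ℕ) ∧ (j:ℕ) ≤ (i:ℕ)+l then mnVr k l ((j:ℕ)-(i:ℕ)) else 0)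
    else
      (if (i:ℕ)+(l+c) ≤ (j:ℕ) ∧ (j:ℕ) ≤ (i:ℕ)+(l+c)+l then
        mnVr k l (l+1+((j:ℕ)-(l+c)-(i:ℕ))) else 0)

/-- The matrix `A = (Ỹ ; -X̃)` built out of two flipped Toeplitz blocks. -/
noncomputable def mnA (k : Type*) [Field k] (l c : ℕ) :
    Matrix (Fin (2*l+2*c)) (Fin c) (MvPolynomial (Fin (2*l+2)) k) :=
  Matrix.of fun j t =>
    if (j:ℕ) < l+c then
      (if (t:ℕ) ≤ (j:ℕ) ∧ (j:ℕ) ≤ (t:ℕ)+l then mnVr k l (l+1+(l+(t:ℕ)-(j:ℕ))) else 0)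
    else
      (if (t:ℕ)+(l+c) ≤ (j:ℕ) ∧ (j:ℕ) ≤ (t:ℕ)+(l+c)+l then
        -(mnVr k l (l+(t:ℕ)-((j:ℕ)-(l+c)))) else 0)

lemma mnB_hom (l c : ℕ) (i : Fin c) (j : Fin (2*l+2*c)) :
    ((mnB k l c) i j).IsHomogeneous 1 := by
  unfold mnB
  simp only [Matrix.of_apply]
  split_ifs
  · exact mnVr_hom _ _
  · exact isHomogeneous_zero _ _ _
  · exact mnVr_hom _ _
  · exact isHomogeneous_zero _ _ _

lemma mnA_hom (l c : ℕ) (j : Fin (2*l+2*c)) (t : Fin c) :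
    ((mnA k l c) j t).IsHomogeneous 1 := by
  unfold mnA
  simp only [Matrix.of_apply]
  split_ifs
  · exact mnVr_hom _ _
  · exact isHomogeneous_zero _ _ _
  · exact (mnVr_hom _ _).neg
  · exact isHomogeneous_zero _ _ _

/-- The key combinatorial identity behind `B * A = 0`. -/
lemma mn_key {R : Type*} [CommRing R] (l c i t : ℕ) (hi : i < c) (ht : t < c) (f : ℕ → R) :
    ∑ j ∈ range (l+c), ((if i ≤ j ∧ j ≤ i+l then f (j-i) else 0) *
        (if t ≤ j ∧ j ≤ t+l then f (l+1+(l+t-j)) else 0))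
    = ∑ j ∈ range (l+c), ((if i ≤ j ∧ j ≤ i+l then f (l+1+(j-i)) else 0) *
        (if t ≤ j ∧ j ≤ t+l then f (l+t-j) else 0)) := by
  simp only [ite_zero_mul_ite_zero]
  rw [← Finset.sum_filter, ← Finset.sum_filter]
  refine Finset.sum_nbij' (fun j => l+t+i-j) (fun j => l+t+i-j) ?_ ?_ ?_ ?_ ?_
  · intro a ha
    simp only [mem_filter, mem_range] at ha ⊢
    omega
  · intro a ha
    simp only [mem_filter, mem_range] at ha ⊢
    omega
  · intro a ha
    simp only [mem_filter, mem_range] at ha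
    show l+t+i-(l+t+i-a) = a
    omega
  · intro a ha
    simp only [mem_filter, mem_range] at ha
    show l+t+i-(l+t+i-a) = a
    omega
  · intro a ha
    simp only [mem_filter, mem_range] at ha
    show f (a-i) * f (l+1+(l+t-a)) = f (l+1+(l+t+i-a-i)) * f (l+t-(l+t+i-a))
    have e1 : l+t+i-a-i = l+t-a := by omega
    have e2 : l+t-(l+t+i-a) = a-i := by omega
    rw [e1, e2, mul_comm]

lemma mnBA (l c : ℕ) : mnB k l c * mnA k l c = 0 := by
  ext i t
  rw [Matrix.mul_apply, Matrix.zero_apply]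
  set G : ℕ → MvPolynomial (Fin (2*l+2)) k := fun n =>
      (if n < l+c then (if (i:ℕ) ≤ n ∧ n ≤ (i:ℕ)+l then mnVr k l (n-(i:ℕ)) else 0)
       else (if (i:ℕ)+(l+c) ≤ n ∧ n ≤ (i:ℕ)+(l+c)+l then
        mnVr k l (l+1+(n-(l+c)-(i:ℕ))) else 0)) *
      (if n < l+c then (if (t:ℕ) ≤ n ∧ n ≤ (t:ℕ)+l then mnVr k l (l+1+(l+(t:ℕ)-n)) else 0)
       else (if (t:ℕ)+(l+c) ≤ n ∧ n ≤ (t:ℕ)+(l+c)+l then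
        -(mnVr k l (l+(t:ℕ)-(n-(l+c)))) else 0)) with hG
  have h1 : ∑ j : Fin (2*l+2*c), mnB k l c i j * mnA k l c j t
      = ∑ j : Fin (2*l+2*c), G (j:ℕ) := Finset.sum_congr rfl (fun j _ => rfl)
  rw [h1, Fin.sum_univ_eq_sum_range, show 2*l+2*c = (l+c)+(l+c) from by ring,
    Finset.sum_range_add]
  have h2 : ∀ n ∈ range (l+c), G n
      = (if (i:ℕ) ≤ n ∧ n ≤ (i:ℕ)+l then mnVr k l (n-(i:ℕ)) else 0) *
        (if (t:ℕ) ≤ n ∧ n ≤ (t:ℕ)+l then mnVr k l (l+1+(l+(t:ℕ)-n)) else 0) := by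
    intro n hn
    rw [mem_range] at hn
    simp only [hG]
    rw [if_pos hn, if_pos hn]
  have h3 : ∀ n ∈ range (l+c), G ((l+c)+n)
      = -((if (i:ℕ) ≤ n ∧ n ≤ (i:ℕ)+l then mnVr k l (l+1+(n-(i:ℕ))) else 0) *
        (if (t:ℕ) ≤ n ∧ n ≤ (t:ℕ)+l then mnVr k l (l+(t:ℕ)-n) else 0)) := by
    intro n hn
    rw [mem_range] at hn
    simp only [hG]
    rw [if_neg (show ¬((l+c)+n < l+c) by omega), if_neg (show ¬((l+c)+n < l+c) by omega)]
    have hc1 : ((i:ℕ)+(l+c) ≤ (l+c)+n ∧ (l+c)+n ≤ (i:ℕ)+(l+c)+l)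
        ↔ ((i:ℕ) ≤ n ∧ n ≤ (i:ℕ)+l) := by omega
    have hc2 : ((t:ℕ)+(l+c) ≤ (l+c)+n ∧ (l+c)+n ≤ (t:ℕ)+(l+c)+l)
        ↔ ((t:ℕ) ≤ n ∧ n ≤ (t:ℕ)+l) := by omega
    have hd1 : (l+c)+n-(l+c)-(i:ℕ) = n-(i:ℕ) := by omega
    have hd2 : l+(t:ℕ)-((l+c)+n-(l+c)) = l+(t:ℕ)-n := by omega
    rw [hd1, hd2, if_congr hc1 rfl rfl, if_congr hc2 rfl rfl]
    split_ifs <;> simp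
  rw [Finset.sum_congr rfl h2, Finset.sum_congr rfl h3, Finset.sum_neg_distrib,
    mn_key l c (i:ℕ) (t:ℕ) i.isLt t.isLt (mnVr k l)]
  exact add_neg_cancel _

/-- Upper triangular with nonzero diagonal has unit determinant. -/
lemma isUnit_det_upper {c : ℕ} (S : Matrix (Fin c) (Fin c) k)
    (h0 : ∀ i j : Fin c, (j:ℕ) < (i:ℕ) → S i j = 0) (hd : ∀ i, S i i ≠ 0) :
    IsUnit S.det := by
  have ht : S.BlockTriangular id := by
    intro i j h
    exact h0 i j h
  rw [Matrix.det_of_upperTriangular ht]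
  exact isUnit_iff_ne_zero.2 (Finset.prod_ne_zero_iff.mpr fun i _ => hd i)

/-- Lower triangular with nonzero diagonal has unit determinant. -/
lemma isUnit_det_lower {c : ℕ} (S : Matrix (Fin c) (Fin c) k)
    (h0 : ∀ i j : Fin c, (i:ℕ) < (j:ℕ) → S i j = 0) (hd : ∀ i, S i i ≠ 0) :
    IsUnit S.det := by
  have ht : S.BlockTriangular OrderDual.toDual := by
    intro i j h
    exact h0 i j h
  rw [Matrix.det_of_lowerTriangular S ht]
  exact isUnit_iff_ne_zero.2 (Finset.prod_ne_zero_iff.mpr fun i _ => hd i)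

lemma rank_eq_card_of_cols {c N : ℕ} (M : Matrix (Fin c) (Fin N) k) (g : Fin c → Fin N)
    (h : IsUnit (M.submatrix id g).det) : M.rank = c := by
  refine le_antisymm (M.rank_le_card_height.trans (Fintype.card_fin c).le) ?_
  have h1 : M * (1 : Matrix (Fin N) (Fin N) k).submatrix (Equiv.refl (Fin N)) g
      = M.submatrix id g := by
    rw [Matrix.mul_submatrix_one]
    rfl
  have h2 : (M.submatrix id g).rank ≤ M.rank := h1 ▸ Matrix.rank_mul_le_left _ _
  have h3 : (M.submatrix id g).rank = c := by
    rw [Matrix.rank_of_isUnit _ ((Matrix.isUnit_iff_isUnit_det _).mpr h), Fintype.card_fin]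
  omega

lemma rank_eq_card_of_rows {c N : ℕ} (M : Matrix (Fin N) (Fin c) k) (g : Fin c → Fin N)
    (h : IsUnit (M.submatrix g id).det) : M.rank = c := by
  refine le_antisymm (M.rank_le_card_width.trans (Fintype.card_fin c).le) ?_
  have h1 : ((1 : Matrix (Fin N) (Fin N) k).submatrix g (Equiv.refl (Fin N))) * M
      = M.submatrix g id := by
    rw [Matrix.one_submatrix_mul]
    rfl
  have h2 : (M.submatrix g id).rank ≤ M.rank := h1 ▸ Matrix.rank_mul_le_right _ _
  have h3 : (M.submatrix g id).rank = c := by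
    rw [Matrix.rank_of_isUnit _ ((Matrix.isUnit_iff_isUnit_det _).mpr h), Fintype.card_fin]
  omega

lemma toeplitz_upper {c l : ℕ} (w : ℕ → k) (p : ℕ) (hpl : p ≤ l) (hp : w p ≠ 0)
    (hmin : ∀ m, m < p → w m = 0) (S : Matrix (Fin c) (Fin c) k)
    (hS : ∀ i s : Fin c, S i s =
      if (i:ℕ) ≤ p+(s:ℕ) ∧ p+(s:ℕ) ≤ (i:ℕ)+l then w (p+(s:ℕ)-(i:ℕ)) else 0) :
    IsUnit S.det := by
  apply isUnit_det_upper
  · intro i s hlt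
    rw [hS]
    split_ifs with h
    · exact hmin _ (by omega)
    · rfl
  · intro i
    rw [hS, if_pos ⟨by omega, by omega⟩]
    have hq : p+(i:ℕ)-(i:ℕ) = p := by omega
    rw [hq]
    exact hp

lemma toeplitz_lower {c l : ℕ} (w : ℕ → k) (q : ℕ) (hql : q ≤ l) (hq : w q ≠ 0)
    (hmax : ∀ m, q < m → w m = 0) (S : Matrix (Fin c) (Fin c) k)
    (hS : ∀ s' s : Fin c, S s' s =
      if (s:ℕ) ≤ l+(s':ℕ)-q ∧ l+(s':ℕ)-q ≤ (s:ℕ)+l then w (l+(s:ℕ)-(l+(s':ℕ)-q)) else 0) :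
    IsUnit S.det := by
  apply isUnit_det_lower
  · intro s' s hlt
    rw [hS]
    split_ifs with h
    · exact hmax _ (by omega)
    · rfl
  · intro s
    rw [hS, if_pos ⟨by omega, by omega⟩]
    have hqq : l+(s:ℕ)-(l+(s:ℕ)-q) = q := by omega
    rw [hqq]
    exact hq

lemma mnE_fin (l : ℕ) (v : Fin (2*l+2) → k) (x : Fin (2*l+2)) : mnE l v (x:ℕ) = v x := by
  unfold mnE
  rw [dif_pos x.isLt]

lemma mnE_out (l : ℕ) (v : Fin (2*l+2) → k) (m : ℕ) (hm : 2*l+2 ≤ m) : mnE l v m = 0 := by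
  unfold mnE
  rw [dif_neg (by omega)]

lemma mnB_rank (l c : ℕ) (hl : 1 ≤ l) (hc : 1 ≤ c) (v : Fin (2*l+2) → k) (hv : v ≠ 0) :
    ((mnB k l c).map (MvPolynomial.eval v)).rank = c := by
  classical
  have hBv : ∀ (i : Fin c) (j : Fin (2*l+2*c)),
      ((mnB k l c).map (MvPolynomial.eval v)) i j
      = if (j:ℕ) < l+c then
          (if (i:ℕ) ≤ (j:ℕ) ∧ (j:ℕ) ≤ (i:ℕ)+l then mnE l v ((j:ℕ)-(i:ℕ)) else 0)
        else
          (if (i:ℕ)+(l+c) ≤ (j:ℕ) ∧ (j:ℕ) ≤ (i:ℕ)+(l+c)+l then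
            mnE l v (l+1+((j:ℕ)-(l+c)-(i:ℕ))) else 0) := by
    intro i j
    simp only [Matrix.map_apply, mnB, Matrix.of_apply, apply_ite (MvPolynomial.eval v),
      map_zero, eval_mnVr]
  obtain ⟨x, hx⟩ : ∃ x, v x ≠ 0 := Function.ne_iff.mp hv
  have hex : mnE l v (x:ℕ) ≠ 0 := by rw [mnE_fin]; exact hx
  by_cases hA : ∃ m, m ≤ l ∧ mnE l v m ≠ 0
  · obtain ⟨hpl, hpne⟩ := Nat.find_spec hA
    set p := Nat.find hA with hp
    have hmin : ∀ m, m < p → mnE l v m = 0 := by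
      intro m hm
      by_contra hne
      exact Nat.find_min hA hm ⟨by omega, hne⟩
    apply rank_eq_card_of_cols _ (fun s : Fin c => (⟨p + (s:ℕ), by
        have := s.isLt; omega⟩ : Fin (2*l+2*c)))
    apply toeplitz_upper (mnE l v) p hpl hpne hmin
    intro i s
    rw [Matrix.submatrix_apply, id_eq, hBv]
    rw [if_pos (show ((⟨p + (s:ℕ), by have := s.isLt; omega⟩ : Fin (2*l+2*c)):ℕ) < l+c by
      simp only []; have := s.isLt; omega)]
  · push_neg at hA
    have hxl : l+1 ≤ (x:ℕ) := by
      by_contra h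
      exact hex (hA _ (by omega))
    have hBex : ∃ m, m ≤ l ∧ mnE l v (l+1+m) ≠ 0 := by
      refine ⟨(x:ℕ)-(l+1), by have := x.isLt; omega, ?_⟩
      have hxx : l+1+((x:ℕ)-(l+1)) = (x:ℕ) := by omega
      rw [hxx]
      exact hex
    obtain ⟨hpl, hpne⟩ := Nat.find_spec hBex
    set p := Nat.find hBex with hp
    have hmin : ∀ m, m < p → mnE l v (l+1+m) = 0 := by
      intro m hm
      by_contra hne
      exact Nat.find_min hBex hm ⟨by omega, hne⟩
    apply rank_eq_card_of_cols _ (fun s : Fin c => (⟨(l+c)+(p + (s:ℕ)), by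
        have := s.isLt; omega⟩ : Fin (2*l+2*c)))
    apply toeplitz_upper (fun m => mnE l v (l+1+m)) p hpl hpne hmin
    intro i s
    rw [Matrix.submatrix_apply, id_eq, hBv]
    simp only []
    rw [if_neg (by omega)]
    have hc1 : ((i:ℕ)+(l+c) ≤ (l+c)+(p+(s:ℕ)) ∧ (l+c)+(p+(s:ℕ)) ≤ (i:ℕ)+(l+c)+l)
        ↔ ((i:ℕ) ≤ p+(s:ℕ) ∧ p+(s:ℕ) ≤ (i:ℕ)+l) := by omega
    have hd1 : (l+c)+(p+(s:ℕ))-(l+c)-(i:ℕ) = p+(s:ℕ)-(i:ℕ) := by omega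
    rw [hd1, if_congr hc1 rfl rfl]

lemma mnA_rank (l c : ℕ) (hl : 1 ≤ l) (hc : 1 ≤ c) (v : Fin (2*l+2) → k) (hv : v ≠ 0) :
    ((mnA k l c).map (MvPolynomial.eval v)).rank = c := by
  classical
  have hAv : ∀ (j : Fin (2*l+2*c)) (t : Fin c),
      ((mnA k l c).map (MvPolynomial.eval v)) j t
      = if (j:ℕ) < l+c then
          (if (t:ℕ) ≤ (j:ℕ) ∧ (j:ℕ) ≤ (t:ℕ)+l then mnE l v (l+1+(l+(t:ℕ)-(j:ℕ))) else 0)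
        else
          (if (t:ℕ)+(l+c) ≤ (j:ℕ) ∧ (j:ℕ) ≤ (t:ℕ)+(l+c)+l then
            -(mnE l v (l+(t:ℕ)-((j:ℕ)-(l+c)))) else 0) := by
    intro j t
    simp only [Matrix.map_apply, mnA, Matrix.of_apply, apply_ite (MvPolynomial.eval v),
      map_zero, map_neg, eval_mnVr]
  obtain ⟨x, hx⟩ : ∃ x, v x ≠ 0 := Function.ne_iff.mp hv
  have hex : mnE l v (x:ℕ) ≠ 0 := by rw [mnE_fin]; exact hx
  by_cases hB : ∃ m, m ≤ l ∧ mnE l v (l+1+m) ≠ 0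
  · obtain ⟨m₀, hm₀l, hm₀⟩ := hB
    have hql : Nat.findGreatest (fun m => mnE l v (l+1+m) ≠ 0) l ≤ l := Nat.findGreatest_le l
    have hqne : mnE l v (l+1+(Nat.findGreatest (fun m => mnE l v (l+1+m) ≠ 0) l)) ≠ 0 :=
      Nat.findGreatest_spec (P := fun m => mnE l v (l+1+m) ≠ 0) hm₀l hm₀
    have hmax : ∀ m, Nat.findGreatest (fun m => mnE l v (l+1+m) ≠ 0) l < m →
        mnE l v (l+1+m) = 0 := by
      intro m hm
      by_cases hml : m ≤ l
      · by_contra hne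
        exact Nat.findGreatest_is_greatest (P := fun m => mnE l v (l+1+m) ≠ 0) hm hml hne
      · exact mnE_out l v _ (by omega)
    set q := Nat.findGreatest (fun m => mnE l v (l+1+m) ≠ 0) l with hqdef
    clear hqdef
    clear_value q
    apply rank_eq_card_of_rows _ (fun s' : Fin c => (⟨l+(s':ℕ)-q, by
        have := s'.isLt; omega⟩ : Fin (2*l+2*c)))
    apply toeplitz_lower (fun m => mnE l v (l+1+m)) q hql hqne hmax
    intro s' s
    rw [Matrix.submatrix_apply, hAv]
    simp only [id_eq, Fin.val_mk]
    rw [if_pos (show l+(s':ℕ)-q < l+c by have := s'.isLt; omega)]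
  · push_neg at hB
    have hxl : (x:ℕ) ≤ l := by
      by_contra h
      refine hex ?_
      have hxx : (x:ℕ) = l+1+((x:ℕ)-(l+1)) := by omega
      rw [hxx]
      exact hB _ (by have := x.isLt; omega)
    have hAex : ∃ m, m ≤ l ∧ mnE l v m ≠ 0 := ⟨(x:ℕ), hxl, hex⟩
    obtain ⟨m₀, hm₀l, hm₀⟩ := hAex
    have hql : Nat.findGreatest (fun m => mnE l v m ≠ 0) l ≤ l := Nat.findGreatest_le l
    have hqne : mnE l v (Nat.findGreatest (fun m => mnE l v m ≠ 0) l) ≠ 0 :=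
      Nat.findGreatest_spec (P := fun m => mnE l v m ≠ 0) hm₀l hm₀
    have hmax0 : ∀ m, Nat.findGreatest (fun m => mnE l v m ≠ 0) l < m → mnE l v m = 0 := by
      intro m hm
      by_cases hml : m ≤ l
      · by_contra hne
        exact Nat.findGreatest_is_greatest (P := fun m => mnE l v m ≠ 0) hm hml hne
      · by_cases hml2 : m < 2*l+2
        · have hxx : m = l+1+(m-(l+1)) := by omega
          rw [hxx]
          exact hB _ (by omega)
        · exact mnE_out l v m (by omega)
    set q := Nat.findGreatest (fun m => mnE l v m ≠ 0) l with hqdef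
    have hmax : ∀ m, q < m → -(mnE l v m) = 0 := by
      intro m hm
      rw [hmax0 m hm, neg_zero]
    clear hqdef hmax0
    clear_value q
    apply rank_eq_card_of_rows _ (fun s' : Fin c => (⟨(l+c)+(l+(s':ℕ)-q), by
        have := s'.isLt; omega⟩ : Fin (2*l+2*c)))
    apply toeplitz_lower (fun m => -(mnE l v m)) q hql (neg_ne_zero.mpr hqne) hmax
    intro s' s
    rw [Matrix.submatrix_apply, hAv]
    simp only [id_eq, Fin.val_mk]
    rw [if_neg (show ¬((l+c)+(l+(s':ℕ)-q) < l+c) by omega)]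
    have hc1 : ((s:ℕ)+(l+c) ≤ (l+c)+(l+(s':ℕ)-q) ∧ (l+c)+(l+(s':ℕ)-q) ≤ (s:ℕ)+(l+c)+l)
        ↔ ((s:ℕ) ≤ l+(s':ℕ)-q ∧ l+(s':ℕ)-q ≤ (s:ℕ)+l) := by omega
    have hd1 : (l+c)+(l+(s':ℕ)-q)-(l+c) = l+(s':ℕ)-q := by omega
    rw [hd1, if_congr hc1 rfl rfl]

end MonadAux

/-- for every `c ≥ 1` and `l ≥ 1` there exist matrices of linear forms
`B` (size `c × (2l+2c)`) and `A` (size `(2l+2c) × c`) over `k[x_0,…,x_{2l+1}]` with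
`B·A = 0` and with `A(v)` and `B(v)` of rank `c` at every nonzero `v ∈ k^{2l+2}`;
that is, on `ℙ^{2l+1}` there is a monad `0 → O(−1)^c → O^{2l+2c} → O(1)^c → 0` whose
cohomology is a vector bundle of rank `2l`, the minimal possible rank. -/
theorem monad_exists_minimal_rank (k : Type*) [Field k] [IsAlgClosed k]
    (c l : ℕ) (hc : 1 ≤ c) (hl : 1 ≤ l) :
    ∃ (B : Matrix (Fin c) (Fin (2 * l + 2 * c)) (MvPolynomial (Fin (2 * l + 2)) k))
      (A : Matrix (Fin (2 * l + 2 * c)) (Fin c) (MvPolynomial (Fin (2 * l + 2)) k)),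
      (∀ i j, (B i j).IsHomogeneous 1) ∧
      (∀ i j, (A i j).IsHomogeneous 1) ∧
      B * A = 0 ∧
      (∀ v : Fin (2 * l + 2) → k, v ≠ 0 →
        (A.map (MvPolynomial.eval v)).rank = c ∧
        (B.map (MvPolynomial.eval v)).rank = c) := by
  exact ⟨mnB k l c, mnA k l c, mnB_hom l c, mnA_hom l c, mnBA l c,
    fun v hv => ⟨mnA_rank l c hl hc v hv, mnB_rank l c hl hc v hv⟩⟩
end

section
/- Let k be an algebraically closed field, n ≥ 1, b ≥ 1, and 1 ≤ c ≤ 2. Let B be a c × b matrix whose entries are homogeneous linear forms in k[x_0,…,x_n], and suppose that for every nonzero v ∈ k^{n+1} the evaluated matrix B(v) has rank c. Then the k-linear map from (S_1)^b to (S_2)^c sending a column vector u of linear forms to the column vector B·u of quadratic forms is surjective, where S_d denotes the space of homogeneous polynomials of degree d in k[x_0,…,x_n]. Equivalently, its kernel has k-dimension b(n+1) − c·(n+1)(n+2)/2. -/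
/-!
Suppose multiplication by `B` missed some `w ∈ (S₂)^c`. A linear functional `F = ∑ᵢ fᵢ ∘ prᵢ`
then kills the image but not `w`. Each `fᵢ` defines a symmetric bilinear form
`Gᵢ(p, q) = fᵢ(p q)` on `S₁`, and `F ∘ B = 0` says `∑ᵢ Gᵢ(Bᵢⱼ, ·) = 0` for every column `j`.
For `c ≤ 2` over an algebraically closed field, some `v ∈ S₁` has all `Gᵢ(v, ·)` proportional
to one nonzero functional `φ`, with a nonzero coefficient vector `a` (for `c = 2` this is an
eigenvector of the pencil `G₀ - γ G₁`). Then `φ` kills every `∑ᵢ aᵢ Bᵢⱼ`. These linear forms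
have no common nonzero zero, as `B(x)` has full row rank for `x ≠ 0`, so they span `S₁` and
`φ = 0`, a contradiction. Hence every `Gᵢ = 0`, so `fᵢ` vanishes on `S₁ · S₁ = S₂` and `F w = 0`. The
kernel dimension then follows from rank–nullity.
-/

open Module LinearMap Submodule MvPolynomial

namespace LinearMap.BilinForm

variable {k V : Type*} [Field k] [AddCommGroup V] [Module k V]

lemma IsSymm.flip_eq {B : LinearMap.BilinForm k V} (hB : B.IsSymm) : LinearMap.flip B = B :=
  ext₂ fun x y => hB.eq y x

variable [FiniteDimensional k V]

lemma IsSymm.range_le_range {f g : LinearMap.BilinForm k V} (hf : f.IsSymm) (hg : g.IsSymm)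
    (h : ker g ≤ ker f) : range f ≤ range g := by
  rw [← hf.flip_eq, ← hg.flip_eq, ← dualAnnihilator_ker_eq_range_flip (B := f),
    ← dualAnnihilator_ker_eq_range_flip (B := g)]
  exact dualAnnihilator_anti h

variable [IsAlgClosed k]

lemma IsSymm.exists_apply_eq_smul_apply {f g : LinearMap.BilinForm k V} (hf : f.IsSymm)
    (hg : g.IsSymm) (hker : ker g ≤ ker f) (hg0 : g ≠ 0) :
    ∃ (γ : k) (v : V), g v ≠ 0 ∧ f v = γ • g v := by
  obtain ⟨h, hgh⟩ : ∃ h : V →ₗ[k] V, g ∘ₗ h = f := by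
    obtain ⟨h, hh⟩ := projective_lifting_property g.rangeRestrict
      (f.codRestrict (range g) fun v => hf.range_le_range hg hker ⟨v, rfl⟩)
      g.surjective_rangeRestrict
    exact ⟨h, congr_arg ((range g).subtype ∘ₗ ·) hh⟩
  have hh : ker g ≤ (ker g).comap h := fun v hv => by
    rw [mem_comap, mem_ker, ← LinearMap.comp_apply, hgh]
    exact hker hv
  have : Nontrivial (V ⧸ ker g) :=
    Submodule.Quotient.nontrivial_iff.mpr (mt ker_eq_top.mp hg0)
  obtain ⟨γ, hγ⟩ := Module.End.exists_eigenvalue ((ker g).mapQ (ker g) h hh)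
  obtain ⟨q, hq⟩ := hγ.exists_hasEigenvector
  obtain ⟨v, rfl⟩ := (ker g).mkQ_surjective q
  refine ⟨γ, v, fun hv => hq.2 ((ker g).mkQ_apply v ▸ (Quotient.mk_eq_zero _).mpr hv), ?_⟩
  have hv : h v - γ • v ∈ ker g := by
    rw [← Quotient.mk_eq_zero, Quotient.mk_sub, Quotient.mk_smul]
    exact sub_eq_zero.mpr hq.apply_eq_smul
  rw [mem_ker, map_sub, map_smul, sub_eq_zero, ← LinearMap.comp_apply, hgh] at hv
  exact hv

lemma exists_apply_eq_smul_of_le_two {c : ℕ} (hc : c ≤ 2)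
    {G : Fin c → LinearMap.BilinForm k V} (hG : ∀ i, (G i).IsSymm) (hG0 : G ≠ 0) :
    ∃ (v : V) (a : Fin c → k) (φ : Dual k V), a ≠ 0 ∧ φ ≠ 0 ∧ ∀ i, G i v = a i • φ := by
  match c, hc with
  | 0, _ => exact absurd (Subsingleton.elim G 0) hG0
  | 1, _ =>
    obtain ⟨v, hv⟩ : ∃ v, G 0 v ≠ 0 := by
      by_contra! h
      exact hG0 (funext fun i => Fin.fin_one_eq_zero i ▸ LinearMap.ext h)
    exact ⟨v, 1, G 0 v, one_ne_zero, hv, fun i => by simp [Fin.fin_one_eq_zero i]⟩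
  | 2, _ =>
    by_cases hker : ker (G 1) ≤ ker (G 0)
    · have hG1 : G 1 ≠ 0 := by
        intro h1
        rw [h1, ker_zero, top_le_iff, ker_eq_top] at hker
        exact hG0 (funext (Fin.forall_fin_two.2 ⟨hker, h1⟩))
      obtain ⟨γ, v, hv, hγ⟩ := (hG 0).exists_apply_eq_smul_apply (hG 1) hker hG1
      exact ⟨v, ![γ, 1], G 1 v, fun h => one_ne_zero (_root_.congr_fun h 1), hv,
        Fin.forall_fin_two.2 ⟨by simpa using hγ, by simp⟩⟩
    · obtain ⟨v, hv1, hv0⟩ := SetLike.not_le_iff_exists.mp hker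
      exact ⟨v, ![1, 0], G 0 v, fun h => one_ne_zero (_root_.congr_fun h 0), hv0,
        Fin.forall_fin_two.2 ⟨by simp, by simpa using hv1⟩⟩

theorem eq_zero_of_sum_apply_eq_zero {c : ℕ} (hc : c ≤ 2) {ι : Type*}
    {G : Fin c → LinearMap.BilinForm k V} (hG : ∀ i, (G i).IsSymm) (β : Fin c → ι → V)
    (hβ : ∀ j, ∑ i, G i (β i j) = 0)
    (hspan : ∀ a : Fin c → k, a ≠ 0 → span k (Set.range fun j => ∑ i, a i • β i j) = ⊤) :
    G = 0 := by
  by_contra hG0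
  obtain ⟨v, a, φ, ha, hφ, hv⟩ := exists_apply_eq_smul_of_le_two hc hG hG0
  have hφβ : span k (Set.range fun j => ∑ i, a i • β i j) ≤ ker φ := by
    refine span_le.mpr ?_
    rintro _ ⟨j, rfl⟩
    calc φ (∑ i, a i • β i j) = ∑ i, G i v (β i j) := by simp [hv]
      _ = (∑ i, G i (β i j)) v := by simp [(hG _).eq v]
      _ = 0 := by rw [hβ j, LinearMap.zero_apply]
  rw [hspan a ha, top_le_iff, ker_eq_top] at hφβ
  exact hφ hφβ

end LinearMap.BilinForm

lemma Matrix.vecMul_ne_zero_of_rank_eq_card {m n K : Type*} [Fintype m] [Fintype n] [Field K]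
    {M : Matrix m n K} (hM : M.rank = Fintype.card m) {a : m → K} (ha : a ≠ 0) :
    Matrix.vecMul a M ≠ 0 := by
  have hrows : LinearIndependent K M.row := linearIndependent_iff_card_eq_finrank_span.mpr
    (by rw [Set.finrank, ← Matrix.rank_eq_finrank_span_row, hM])
  simpa using (Matrix.vecMul_injective_iff.mpr hrows).ne ha

namespace Submodule

variable {K M N : Type*} [DivisionRing K] [AddCommGroup M] [Module K M] [AddCommGroup N]
  [Module K N]

theorem finrank_map_add_finrank_ker_inf (f : M →ₗ[K] N) (p : Submodule K M)
    [FiniteDimensional K p] :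
    finrank K (p.map f) + finrank K ↥(ker f ⊓ p) = finrank K p := by
  have hker : finrank K (ker (f.domRestrict p)) = finrank K ↥(ker f ⊓ p) := by
    rw [ker_domRestrict, inf_comm, ← map_comap_subtype]
    exact (equivMapOfInjective _ p.injective_subtype _).finrank_eq
  rw [← hker, ← range_domRestrict]
  exact (f.domRestrict p).finrank_range_add_finrank_ker

lemma range_compLeft_subtype (p : Submodule K M) (ι : Type*) :
    range (p.subtype.compLeft ι) = pi Set.univ fun _ : ι => p := by
  rw [range_compLeft, range_subtype]

instance (p : Submodule K M) [FiniteDimensional K p] (ι : Type*) [Finite ι] :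
    FiniteDimensional K (pi Set.univ fun _ : ι => p) :=
  range_compLeft_subtype p ι ▸ inferInstance

theorem finrank_pi_univ_const (p : Submodule K M) [FiniteDimensional K p] (ι : Type*)
    [Fintype ι] : finrank K (pi Set.univ fun _ : ι => p) = Fintype.card ι * finrank K p := by
  rw [← range_compLeft_subtype, finrank_range_of_inj p.injective_subtype.comp_left,
    Module.finrank_pi_fintype, Finset.sum_const, Finset.card_univ, smul_eq_mul]

end Submodule

namespace MvPolynomial

variable {σ k : Type*} [Field k]

instance [Finite σ] (m : ℕ) : FiniteDimensional k (homogeneousSubmodule σ k m) :=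
  Module.Finite.iff_fg.mpr (homogeneousSubmodule_fg σ k m)

theorem finrank_homogeneousSubmodule [Fintype σ] (m : ℕ) :
    finrank k (homogeneousSubmodule σ k m) = (Fintype.card σ).multichoose m := by
  classical
  rw [homogeneousSubmodule_eq_finsupp_supported, ← restrictSupport,
    finrank_eq_nat_card_basis (basisRestrictSupport k _), ← Finset.card_univ,
    ← Finset.card_finsuppAntidiag_nat_eq_multichoose, ← Nat.card_eq_finsetCard]
  congr! 2
  ext d
  simp [Finsupp.degree_eq_sum]

lemma span_range_X_eq_top :
    span k (Set.range fun i => (⟨X i, isHomogeneous_X k i⟩ : homogeneousSubmodule σ k 1)) = ⊤ := by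
  apply map_injective_of_injective (homogeneousSubmodule σ k 1).injective_subtype
  rw [Submodule.map_span, ← Set.range_comp, map_subtype_top]
  exact homogeneousSubmodule_one_eq_span_X.symm

lemma span_eq_top_of_forall_exists_eval_ne_zero {ι : Type*} (p : ι → homogeneousSubmodule σ k 1)
    (hp : ∀ v : σ → k, v ≠ 0 → ∃ j, eval v (p j : MvPolynomial σ k) ≠ 0) :
    span k (Set.range p) = ⊤ := by
  by_contra hne
  obtain ⟨ψ, hψ0, hψ⟩ := exists_dual_map_eq_bot_of_lt_top (lt_top_iff_ne_top.2 hne) inferInstance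
  set v : σ → k := fun i => ψ ⟨X i, isHomogeneous_X k i⟩
  have hψv : ψ = (aeval v).toLinearMap ∘ₗ (homogeneousSubmodule σ k 1).subtype :=
    ext_on_range span_range_X_eq_top fun i => by simp [v]
  have hv : v ≠ 0 := fun hv =>
    hψ0 (ext_on_range span_range_X_eq_top fun i => congr_fun hv i)
  obtain ⟨j, hj⟩ := hp v hv
  have : ψ (p j) = 0 := by
    rw [← mem_bot k, ← hψ]
    exact mem_map_of_mem (subset_span ⟨j, rfl⟩)
  rw [hψv] at this
  exact hj (by simpa using this)

lemma isHomogeneous_mulVec {m n R : Type*} [CommSemiring R] [Fintype n]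
    {B : Matrix m n (MvPolynomial σ R)} {d e : ℕ} (hB : ∀ i j, (B i j).IsHomogeneous d)
    {u : n → MvPolynomial σ R} (hu : ∀ j, (u j).IsHomogeneous e) (i : m) :
    (B.mulVec u i).IsHomogeneous (d + e) :=
  IsHomogeneous.sum _ _ _ fun j _ => (hB i j).mul (hu j)

lemma span_range_sum_smul_eq_top {m ι : Type*} [Fintype m] [Fintype ι]
    {B : Matrix m ι (MvPolynomial σ k)} (hB1 : ∀ i j, (B i j).IsHomogeneous 1)
    (hB2 : ∀ v : σ → k, v ≠ 0 → (B.map (eval v)).rank = Fintype.card m)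
    {a : m → k} (ha : a ≠ 0) :
    span k (Set.range fun j =>
      ∑ i, a i • (⟨B i j, hB1 i j⟩ : homogeneousSubmodule σ k 1)) = ⊤ := by
  refine span_eq_top_of_forall_exists_eval_ne_zero _ fun v hv => ?_
  obtain ⟨j, hj⟩ := Function.ne_iff.mp (Matrix.vecMul_ne_zero_of_rank_eq_card (hB2 v hv) ha)
  exact ⟨j, by simpa [Matrix.vecMul, dotProduct] using hj⟩

variable [IsAlgClosed k] [Finite σ]

theorem dual_apply_eq_zero_of_forall_mulVec {c : ℕ} (hc : c ≤ 2) {ι : Type*} [Fintype ι]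
    [DecidableEq ι] {B : Matrix (Fin c) ι (MvPolynomial σ k)}
    (hB1 : ∀ i j, (B i j).IsHomogeneous 1)
    (hB2 : ∀ v : σ → k, v ≠ 0 → (B.map (eval v)).rank = c)
    (F : Dual k (Fin c → MvPolynomial σ k))
    (hF : ∀ u : ι → MvPolynomial σ k, (∀ j, (u j).IsHomogeneous 1) → F (B.mulVec u) = 0)
    {w : Fin c → MvPolynomial σ k} (hw : ∀ i, (w i).IsHomogeneous 2) : F w = 0 := by
  let f (i : Fin c) : Dual k (MvPolynomial σ k) :=
    F ∘ₗ LinearMap.single k (fun _ => MvPolynomial σ k) i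
  have hFf (w : Fin c → MvPolynomial σ k) : F w = ∑ i, f i (w i) := by
    simp [f, ← map_sum, Finset.univ_sum_single]
  let S₁ := homogeneousSubmodule σ k 1
  let G (i : Fin c) : LinearMap.BilinForm k S₁ :=
    ((LinearMap.mul k _).compl₁₂ S₁.subtype S₁.subtype).compr₂ (f i)
  have hG (i : Fin c) : (G i).IsSymm := ⟨fun p q => by simp [G, mul_comm]⟩
  let β (i : Fin c) (j : ι) : S₁ := ⟨B i j, hB1 i j⟩
  have hβ (j : ι) : ∑ i, G i (β i j) = 0 := LinearMap.ext fun q => by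
    have hq (j' : ι) :
        (Pi.single (M := fun _ => MvPolynomial σ k) j q j').IsHomogeneous 1 := by
      rw [Pi.single_apply]
      split_ifs
      exacts [q.2, isHomogeneous_zero σ k 1]
    simpa [hFf, Matrix.mulVec_single, G, β, mul_comm] using hF _ hq
  have hspan (a : Fin c → k) (ha : a ≠ 0) :
      span k (Set.range fun j => ∑ i, a i • β i j) = ⊤ :=
    span_range_sum_smul_eq_top hB1 (by simpa using hB2) ha
  have hG0 := LinearMap.BilinForm.eq_zero_of_sum_apply_eq_zero hc hG β hβ hspan
  have hf (i : Fin c) : homogeneousSubmodule σ k 2 ≤ ker (f i) := by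
    rw [← homogeneousSubmodule_one_pow, pow_two, mul_le]
    intro p hp q hq
    exact LinearMap.congr_fun₂ (congr_fun hG0 i) ⟨p, hp⟩ ⟨q, hq⟩
  rw [hFf]
  exact Finset.sum_eq_zero fun i _ => hf i (hw i)

theorem map_mulVecLin_pi_homogeneous_one {c : ℕ} (hc : c ≤ 2) {ι : Type*} [Fintype ι]
    [DecidableEq ι] {B : Matrix (Fin c) ι (MvPolynomial σ k)}
    (hB1 : ∀ i j, (B i j).IsHomogeneous 1)
    (hB2 : ∀ v : σ → k, v ≠ 0 → (B.map (eval v)).rank = c) :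
    (pi Set.univ fun _ : ι => homogeneousSubmodule σ k 1).map (B.mulVecLin.restrictScalars k)
      = pi Set.univ fun _ : Fin c => homogeneousSubmodule σ k 2 := by
  refine le_antisymm (map_le_iff_le_comap.mpr fun u hu i _ =>
    isHomogeneous_mulVec hB1 (fun j => hu j trivial) i) ?_
  rw [← Subspace.dualAnnihilator_le_dualAnnihilator_iff]
  intro F hF
  rw [mem_dualAnnihilator] at hF ⊢
  exact fun w hw => dual_apply_eq_zero_of_forall_mulVec hc hB1 hB2 F
    (fun u hu => hF _ (mem_map_of_mem fun j _ => hu j)) fun i => hw i trivial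

end MvPolynomial

theorem mulVec_linear_forms_surjective_general (k : Type*) [Field k] [IsAlgClosed k]
    (n b c : ℕ) (hc2 : c ≤ 2)
    (B : Matrix (Fin c) (Fin b) (MvPolynomial (Fin (n + 1)) k))
    (hB1 : ∀ i j, (B i j).IsHomogeneous 1)
    (hB2 : ∀ v : Fin (n + 1) → k, v ≠ 0 → (B.map (MvPolynomial.eval v)).rank = c) :
    (∀ w : Fin c → MvPolynomial (Fin (n + 1)) k, (∀ i, (w i).IsHomogeneous 2) →
      ∃ u : Fin b → MvPolynomial (Fin (n + 1)) k,
        (∀ j, (u j).IsHomogeneous 1) ∧ B.mulVec u = w) ∧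
    Module.finrank k
      ↥(LinearMap.ker (B.mulVecLin.restrictScalars k) ⊓
        Submodule.pi Set.univ
          (fun _ : Fin b => MvPolynomial.homogeneousSubmodule (Fin (n + 1)) k 1))
      = b * (n + 1) - c * ((n + 1) * (n + 2) / 2) := by
  have hmap := map_mulVecLin_pi_homogeneous_one hc2 hB1 hB2
  refine ⟨fun w hw => ?_, ?_⟩
  · obtain ⟨u, hu, rfl⟩ := hmap.ge fun i _ => hw i
    exact ⟨u, fun j => hu j trivial, rfl⟩
  · have hdim := finrank_map_add_finrank_ker_inf (B.mulVecLin.restrictScalars k)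
      (pi Set.univ fun _ : Fin b => homogeneousSubmodule (Fin (n + 1)) k 1)
    have hS₂ : (n + 1).multichoose 2 = (n + 1) * (n + 2) / 2 := by
      simp [Nat.multichoose_eq, Nat.choose_two_right, Nat.mul_comm]
    rw [hmap, finrank_pi_univ_const, finrank_pi_univ_const, finrank_homogeneousSubmodule,
      finrank_homogeneousSubmodule, Fintype.card_fin, Fintype.card_fin, Fintype.card_fin,
      Nat.multichoose_one_right, hS₂] at hdim
    omega

/-- if `B` is a `c × b` matrix of linear forms in `k[x_0,…,x_n]` with
`1 ≤ c ≤ 2` whose evaluation at every nonzero point has rank `c`, then multiplication by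
`B` maps `b`-tuples of linear forms onto `c`-tuples of quadratic forms, and the kernel of
this `k`-linear map has dimension `b(n+1) − c·(n+1)(n+2)/2`. -/
theorem mulVec_linear_forms_surjective (k : Type*) [Field k] [IsAlgClosed k]
    (n b c : ℕ) (hn : 1 ≤ n) (hb : 1 ≤ b) (hc1 : 1 ≤ c) (hc2 : c ≤ 2)
    (B : Matrix (Fin c) (Fin b) (MvPolynomial (Fin (n + 1)) k))
    (hB1 : ∀ i j, (B i j).IsHomogeneous 1)
    (hB2 : ∀ v : Fin (n + 1) → k, v ≠ 0 → (B.map (MvPolynomial.eval v)).rank = c) :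
    (∀ w : Fin c → MvPolynomial (Fin (n + 1)) k, (∀ i, (w i).IsHomogeneous 2) →
      ∃ u : Fin b → MvPolynomial (Fin (n + 1)) k,
        (∀ j, (u j).IsHomogeneous 1) ∧ B.mulVec u = w) ∧
    Module.finrank k
      ↥(LinearMap.ker (B.mulVecLin.restrictScalars k) ⊓
        Submodule.pi Set.univ
          (fun _ : Fin b => MvPolynomial.homogeneousSubmodule (Fin (n + 1)) k 1))
      = b * (n + 1) - c * ((n + 1) * (n + 2) / 2) :=
  mulVec_linear_forms_surjective_general k n b c hc2 B hB1 hB2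
end

section
/- Let k be a field, and in the polynomial ring k[x_0,x_1,x_2,x_3,x_4] consider the 2 × 6 matrix B with rows (x_0², x_1², 0, x_2², x_3², 0) and (0, x_0², x_1², 0, x_2², x_3²), and the 6 × 2 matrix A with rows (−x_2², −x_3²), (0, −x_2²), (−x_3², 0), (x_0², x_1²), (0, x_0²), (x_1², 0). Then: (1) B·A = 0; (2) for v = (v_0,…,v_4) ∈ k^5, the evaluated matrices A(v) and B(v) both have rank 2 if and only if (v_0,v_1,v_2,v_3) ≠ (0,0,0,0); and (3) every v with (v_0,v_1,v_2,v_3) = (0,0,0,0) and v ≠ 0 does not satisfy v_0²+v_1²+v_2²+v_3²+v_4² = 0, so both matrices have maximal rank at every point of the quadric threefold Q_3 ⊂ ℙ⁴ defined by x_0²+x_1²+x_2²+x_3²+x_4² = 0. -/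
open MvPolynomial

/-- The matrix `B` of the first explicit example on the quadric threefold `Q₃ ⊂ ℙ⁴`. -/
noncomputable def exB (k : Type*) [Field k] : Matrix (Fin 2) (Fin 6) (MvPolynomial (Fin 5) k) :=
  !![X 0 ^ 2, X 1 ^ 2, 0, X 2 ^ 2, X 3 ^ 2, 0;
     0, X 0 ^ 2, X 1 ^ 2, 0, X 2 ^ 2, X 3 ^ 2]

/-- The matrix `A` of the first explicit example on the quadric threefold `Q₃ ⊂ ℙ⁴`. -/
noncomputable def exA (k : Type*) [Field k] : Matrix (Fin 6) (Fin 2) (MvPolynomial (Fin 5) k) :=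
  !![-X 2 ^ 2, -X 3 ^ 2;
     0, -X 2 ^ 2;
     -X 3 ^ 2, 0;
     X 0 ^ 2, X 1 ^ 2;
     0, X 0 ^ 2;
     X 1 ^ 2, 0]

@[simp] lemma cons_val_five' {α : Type*} {m : ℕ} (x : α)
    (u : Fin m.succ.succ.succ.succ.succ → α) :
    Matrix.vecCons x u 5 =
      Matrix.vecHead (Matrix.vecTail (Matrix.vecTail (Matrix.vecTail (Matrix.vecTail u)))) :=
  rfl

lemma rank_eq_two_of_minor {K : Type*} [Field K] {m : ℕ}
    (M : Matrix (Fin m) (Fin 2) K) (i j : Fin m)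
    (h : (!![M i 0, M i 1; M j 0, M j 1]).det ≠ 0) : M.rank = 2 := by
  have hinj : Function.Injective M.mulVecLin := by
    rw [← LinearMap.ker_eq_bot, LinearMap.ker_eq_bot']
    intro x hx
    have hx' : M.mulVec x = 0 := hx
    have hN : (!![M i 0, M i 1; M j 0, M j 1]).mulVec x = 0 := by
      funext r
      fin_cases r
      · simpa [Matrix.mulVec, dotProduct, Fin.sum_univ_two] using congrFun hx' i
      · simpa [Matrix.mulVec, dotProduct, Fin.sum_univ_two] using congrFun hx' j
    exact Matrix.eq_zero_of_mulVec_eq_zero h hN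
  rw [Matrix.rank, LinearMap.finrank_range_of_inj hinj]
  simp

lemma exA_map {k : Type*} [Field k] (v : Fin 5 → k) :
    (exA k).map (MvPolynomial.eval v) =
      !![-(v 2) ^ 2, -(v 3) ^ 2;
         0, -(v 2) ^ 2;
         -(v 3) ^ 2, 0;
         (v 0) ^ 2, (v 1) ^ 2;
         0, (v 0) ^ 2;
         (v 1) ^ 2, 0] := by
  ext i j
  fin_cases i <;> fin_cases j <;> simp [exA]

lemma exB_map {k : Type*} [Field k] (v : Fin 5 → k) :
    (exB k).map (MvPolynomial.eval v) =
      !![(v 0) ^ 2, (v 1) ^ 2, 0, (v 2) ^ 2, (v 3) ^ 2, 0;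
         0, (v 0) ^ 2, (v 1) ^ 2, 0, (v 2) ^ 2, (v 3) ^ 2] := by
  ext i j
  fin_cases i <;> fin_cases j <;> simp [exB]

/-- the explicit pair `(A,B)` satisfies `B·A = 0`; both evaluated matrices
have rank `2` at `v ∈ k⁵` exactly when `(v₀,v₁,v₂,v₃) ≠ 0`; and any nonzero `v` with
`(v₀,v₁,v₂,v₃) = 0` does not lie on the quadric `x₀²+x₁²+x₂²+x₃²+x₄² = 0`, so `A` and `B`
have maximal rank at every point of the quadric threefold `Q₃ ⊂ ℙ⁴`. -/
theorem quadric_example_one (k : Type*) [Field k] :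
    exB k * exA k = 0 ∧
    (∀ v : Fin 5 → k,
      (((exA k).map (MvPolynomial.eval v)).rank = 2 ∧
        ((exB k).map (MvPolynomial.eval v)).rank = 2) ↔
      ¬(v 0 = 0 ∧ v 1 = 0 ∧ v 2 = 0 ∧ v 3 = 0)) ∧
    (∀ v : Fin 5 → k, v ≠ 0 → (v 0 = 0 ∧ v 1 = 0 ∧ v 2 = 0 ∧ v 3 = 0) →
      v 0 ^ 2 + v 1 ^ 2 + v 2 ^ 2 + v 3 ^ 2 + v 4 ^ 2 ≠ 0) := by
  refine ⟨?_, ?_, ?_⟩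
  · ext i j
    fin_cases i <;> fin_cases j <;>
      simp [exA, exB, Matrix.mul_apply, Fin.sum_univ_succ] <;> ring_nf
  · intro v
    constructor
    · rintro ⟨hA, -⟩ ⟨h0, h1, h2, h3⟩
      rw [exA_map, h0, h1, h2, h3] at hA
      have hz : (!![-(0:k) ^ 2, -(0:k) ^ 2; 0, -(0:k) ^ 2; -(0:k) ^ 2, 0; (0:k) ^ 2, (0:k) ^ 2;
          0, (0:k) ^ 2; (0:k) ^ 2, 0]) = (0 : Matrix (Fin 6) (Fin 2) k) := by
        ext i j; fin_cases i <;> fin_cases j <;> simp [Matrix.vecHead, Matrix.vecTail]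
      rw [hz, Matrix.rank_zero] at hA
      norm_num at hA
    · intro hne
      rw [exA_map, exB_map]
      rw [← Matrix.rank_transpose (!![(v 0) ^ 2, (v 1) ^ 2, 0, (v 2) ^ 2, (v 3) ^ 2, 0;
         0, (v 0) ^ 2, (v 1) ^ 2, 0, (v 2) ^ 2, (v 3) ^ 2])]
      by_cases h0 : v 0 = 0
      · by_cases h1 : v 1 = 0
        · by_cases h2 : v 2 = 0
          · have h3 : v 3 ≠ 0 := by tauto
            exact ⟨rank_eq_two_of_minor _ 0 2 (by simp [Matrix.det_fin_two, h2, h3]),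
              rank_eq_two_of_minor _ 4 5 (by simp [Matrix.det_fin_two, h2, h3])⟩
          · exact ⟨rank_eq_two_of_minor _ 0 1 (by simp [Matrix.det_fin_two, h2]),
              rank_eq_two_of_minor _ 3 4 (by simp [Matrix.det_fin_two, h2])⟩
        · exact ⟨rank_eq_two_of_minor _ 3 5 (by simp [Matrix.det_fin_two, h0, h1]),
            rank_eq_two_of_minor _ 1 2 (by simp [Matrix.det_fin_two, h0, h1])⟩
      · exact ⟨rank_eq_two_of_minor _ 3 4 (by simp [Matrix.det_fin_two, h0]),
          rank_eq_two_of_minor _ 0 1 (by simp [Matrix.det_fin_two, h0])⟩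
  · rintro v hv ⟨h0, h1, h2, h3⟩
    have h4 : v 4 ≠ 0 := by
      intro h4
      apply hv
      funext i
      fin_cases i <;> assumption
    simp [h0, h1, h2, h3]
    exact h4
end
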